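/- Let ℏ > 0, let a ≤ b be real numbers, let g : ℝ → ℝ be continuous, and let f : ℝ → ℂ satisfy: for every t ∈ [a,b], f has derivative (i/ℏ)·g(t)·f(t) at t. If f(a) = f(b) and f(a) ≠ 0, then there exists an integer n with ∫_a^b g(t) dt = 2πnℏ. -/

import Mathlib

open MeasureTheory intervalIntegral

/-!
Along `[a, b]` the function `f` solves the linear equation `f' = (i/ℏ) g f`, so
`f b = exp ((i/ℏ) ∫_a^b g) · f a`. Since `f a = f b ≠ 0`, the factor `exp ((i/ℏ) ∫_a^b g)` equals `1`,
which forces `(1/ℏ) ∫_a^b g ∈ 2πℤ`.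
-/

open Complex in
theorem eq_exp_integral_mul_of_hasDerivAt_mul {a b : ℝ} (hab : a ≤ b) {g : ℝ → ℂ}
    (hg : Continuous g) {f : ℝ → ℂ} (hf : ∀ t ∈ Set.Icc a b, HasDerivAt f (g t * f t) t) :
    f b = exp (∫ t in a..b, g t) * f a := by
  set G : ℝ → ℂ := fun t => ∫ s in a..t, g s
  set h : ℝ → ℂ := fun t => exp (-G t) * f t
  have hh_deriv : ∀ t ∈ Set.Icc a b, HasDerivAt h 0 t := by
    intro t ht
    have hG : HasDerivAt G (g t) t := (hg.integral_hasStrictDerivAt a t).hasDerivAt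
    exact (hG.fun_neg.cexp.fun_mul (hf t ht)).congr_deriv (by ring)
  have hhb : h b = h a :=
    constant_of_has_deriv_right_zero (fun t ht => (hh_deriv t ht).continuousAt.continuousWithinAt)
      (fun t ht => (hh_deriv t (Set.mem_Icc_of_Ico ht)).hasDerivWithinAt) b (Set.right_mem_Icc.2 hab)
  calc f b = exp (G b) * h b := by
        simp only [h, ← mul_assoc, ← exp_add, add_neg_cancel, exp_zero, one_mul]
    _ = exp (G b) * f a := by simp [hhb, h, G]

theorem exists_int_eq_two_pi_mul_of_cexp_mul_I_eq_one {x : ℝ} (hx : Complex.exp (x * Complex.I) = 1) :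
    ∃ n : ℤ, x = 2 * Real.pi * n := by
  obtain ⟨n, hn⟩ := Circle.exp_eq_one.1 (Circle.ext (by simpa [Circle.coe_exp] using hx))
  exact ⟨n, by rw [hn, mul_comm]⟩

theorem bohr_sommerfeld_condition (ℏ : ℝ) (hℏ : 0 < ℏ) (a b : ℝ) (hab : a ≤ b)
    (g : ℝ → ℝ) (hg : Continuous g) (f : ℝ → ℂ)
    (hf : ∀ t ∈ Set.Icc a b, HasDerivAt f (Complex.I / ℏ * g t * f t) t)
    (hfa : f a = f b) (hfa0 : f a ≠ 0) :
    ∃ n : ℤ, ∫ t in a..b, g t = 2 * Real.pi * n * ℏ := by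
  have hsol := eq_exp_integral_mul_of_hasDerivAt_mul (g := fun t => Complex.I / ℏ * g t) hab
    (by fun_prop) hf
  rw [intervalIntegral.integral_const_mul, intervalIntegral.integral_ofReal, ← hfa] at hsol
  have hexp : Complex.exp (((∫ t in a..b, g t) / ℏ : ℝ) * Complex.I) = 1 := by
    rw [← (mul_eq_right₀ hfa0).1 hsol.symm]
    push_cast
    ring_nf
  obtain ⟨n, hn⟩ := exists_int_eq_two_pi_mul_of_cexp_mul_I_eq_one hexp
  exact ⟨n, by rw [← hn, div_mul_cancel₀ _ hℏ.ne']⟩
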